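/- Let Z : B → ℝ⁴ be a C¹ conformally parametrized immersion with area element W_Z (so |Z_u|² = |Z_v|² = W_Z > 0, Z_u·Z_v = 0), let α ∈ (0,1), c_6 > 0, C_1 > 0, and suppose W_Z(w) ≥ C_1 for all w ∈ B_{1/2}(0,0) and |Z_{u^i}(w_1) − Z_{u^i}(w_2)| ≤ c_6 |w_1 − w_2|^α for i = 1,2 and all w_1, w_2 ∈ B_{1/4}(0,0). Let N̄_1, N̄_2 ∈ ℝ⁴ be orthonormal vectors that are both orthogonal to Z_u(0,0) and Z_v(0,0). Then there exist ν_2 > 0 and c_9 > 0 depending only on c_6, C_1 and α, and maps N_1, N_2 : B_{ν_2}(0,0) → ℝ⁴ such that at every w ∈ B_{ν_2}(0,0): |N_1(w)| = |N_2(w)| = 1, N_1(w)·N_2(w) = 0, N_k(w)·Z_u(w) = N_k(w)·Z_v(w) = 0 for k = 1,2, and |N_k(w_1) − N_k(w_2)| ≤ c_9 |w_1 − w_2|^α for k = 1,2 and all w_1, w_2 ∈ B_{ν_2}(0,0). -/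

import Mathlib

/-!
The unit tangent vectors `eᵢ = Z_{uⁱ} / |Z_{uⁱ}|` form an orthonormal frame that is `α`-Hölder
with constant `2 c₆ / √C₁`, because `v ↦ v / |v|` is `2/m`-Lipschitz on `{|v| ≥ m}`. Removing from
`N̄₁, N̄₂` their components along `e₁(w), e₂(w)` gives Hölder normal fields which, since
`eᵢ(0) ⊥ N̄ₖ`, stay within `1/10` of `N̄ₖ` on a ball whose radius depends only on `c₆, C₁, α`.
Gram–Schmidt applied to two such nearly orthonormal fields is well defined with uniformly bounded
denominators, so it preserves the Hölder bound up to a universal factor.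
-/

open scoped RealInnerProductSpace
open Metric Real

noncomputable section

abbrev E2 : Type := EuclideanSpace ℝ (Fin 2)
abbrev E4 : Type := EuclideanSpace ℝ (Fin 4)

/-- Partial derivative of a map `Z : ℝ² → ℝ⁴` in the `i`-th coordinate direction. -/
def pd (Z : E2 → E4) (i : Fin 2) (w : E2) : E4 :=
  fderiv ℝ Z w (EuclideanSpace.single i 1)

open NormedSpace

/-- `f` is `K`-Lipschitz on `s` with respect to the gauge `d`; for `d x y = dist x y ^ α` this is
`α`-Hölder continuity with constant `K`. -/
def ControlledOn {X F : Type*} [SeminormedAddCommGroup F]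
    (d : X → X → ℝ) (K : ℝ) (f : X → F) (s : Set X) : Prop :=
  ∀ x ∈ s, ∀ y ∈ s, ‖f x - f y‖ ≤ K * d x y

namespace ControlledOn

variable {X F : Type*} [NormedAddCommGroup F] {d : X → X → ℝ} {s : Set X}

lemma const (c : F) : ControlledOn d 0 (fun _ => c) s := by
  intro x _ y _
  simp

lemma mono {K K' : ℝ} {f : X → F} (hf : ControlledOn d K f s) (hK : K ≤ K')
    (hd : ∀ x y, 0 ≤ d x y) : ControlledOn d K' f s :=
  fun x hx y hy => (hf x hx y hy).trans (mul_le_mul_of_nonneg_right hK (hd x y))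

lemma sub {K K' : ℝ} {f g : X → F} (hf : ControlledOn d K f s) (hg : ControlledOn d K' g s) :
    ControlledOn d (K + K') (fun x => f x - g x) s := by
  intro x hx y hy
  calc ‖f x - g x - (f y - g y)‖ = ‖(f x - f y) - (g x - g y)‖ := by congr 1; abel
    _ ≤ ‖f x - f y‖ + ‖g x - g y‖ := norm_sub_le _ _
    _ ≤ K * d x y + K' * d x y := add_le_add (hf x hx y hy) (hg x hx y hy)
    _ = (K + K') * d x y := by ring

lemma sum {ι : Type*} (t : Finset ι) {K : ι → ℝ} {f : ι → X → F}
    (hf : ∀ i ∈ t, ControlledOn d (K i) (f i) s) :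
    ControlledOn d (∑ i ∈ t, K i) (fun x => ∑ i ∈ t, f i x) s := by
  intro x hx y hy
  rw [← Finset.sum_sub_distrib, Finset.sum_mul]
  exact (norm_sum_le _ _).trans (Finset.sum_le_sum fun i hi => hf i hi x hx y hy)

lemma smul [NormedSpace ℝ F] {Ka Kf A B : ℝ} {a : X → ℝ} {f : X → F}
    (ha : ControlledOn d Ka a s) (hf : ControlledOn d Kf f s)
    (ha_le : ∀ x ∈ s, |a x| ≤ A) (hf_le : ∀ x ∈ s, ‖f x‖ ≤ B) :
    ControlledOn d (Ka * B + A * Kf) (fun x => a x • f x) s := by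
  intro x hx y hy
  have hax := ha x hx y hy
  rw [Real.norm_eq_abs] at hax
  calc ‖a x • f x - a y • f y‖ = ‖(a x - a y) • f x + a y • (f x - f y)‖ := by
        rw [sub_smul, smul_sub]; abel_nf
    _ ≤ |a x - a y| * ‖f x‖ + |a y| * ‖f x - f y‖ := by
        refine (norm_add_le _ _).trans_eq ?_
        rw [norm_smul, norm_smul, Real.norm_eq_abs, Real.norm_eq_abs]
    _ ≤ Ka * d x y * B + A * (Kf * d x y) := by
        gcongr
        · exact (abs_nonneg _).trans hax
        · exact hf_le x hx
        · exact (abs_nonneg _).trans (ha_le y hy)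
        · exact ha_le y hy
        · exact hf x hx y hy
    _ = (Ka * B + A * Kf) * d x y := by ring

lemma inner [InnerProductSpace ℝ F] {Kf Kg A B : ℝ} {f g : X → F}
    (hf : ControlledOn d Kf f s) (hg : ControlledOn d Kg g s)
    (hf_le : ∀ x ∈ s, ‖f x‖ ≤ A) (hg_le : ∀ x ∈ s, ‖g x‖ ≤ B) :
    ControlledOn d (Kf * B + A * Kg) (fun x => ⟪f x, g x⟫) s := by
  intro x hx y hy
  rw [Real.norm_eq_abs]
  calc |⟪f x, g x⟫ - ⟪f y, g y⟫| = |⟪f x - f y, g x⟫ + ⟪f y, g x - g y⟫| := by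
        rw [inner_sub_left, inner_sub_right]; ring_nf
    _ ≤ ‖f x - f y‖ * ‖g x‖ + ‖f y‖ * ‖g x - g y‖ :=
        (abs_add_le _ _).trans (add_le_add (abs_real_inner_le_norm _ _)
          (abs_real_inner_le_norm _ _))
    _ ≤ Kf * d x y * B + A * (Kg * d x y) := by
        gcongr
        · exact (norm_nonneg _).trans (hf x hx y hy)
        · exact hf x hx y hy
        · exact hg_le x hx
        · exact (norm_nonneg _).trans (hf_le y hy)
        · exact hf_le y hy
        · exact hg x hx y hy
    _ = (Kf * B + A * Kg) * d x y := by ring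

end ControlledOn

section Normalize

variable {F : Type*} [NormedAddCommGroup F] [NormedSpace ℝ F]

lemma norm_normalize_sub_normalize_le {x : F} (hx : x ≠ 0) (y : F) :
    ‖normalize x - normalize y‖ ≤ 2 * ‖x - y‖ / ‖x‖ := by
  have hx₀ : 0 < ‖x‖ := norm_pos_iff.2 hx
  rcases eq_or_ne y 0 with rfl | hy
  · rw [normalize_zero_eq_zero, sub_zero, sub_zero, norm_normalize hx, mul_div_assoc,
      div_self hx₀.ne']
    norm_num
  have hy₀ : 0 < ‖y‖ := norm_pos_iff.2 hy
  have hsplit : normalize x - normalize y = ‖x‖⁻¹ • (x - y) + (‖x‖⁻¹ - ‖y‖⁻¹) • y := by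
    simp only [NormedSpace.normalize, smul_sub, sub_smul]; abel
  have hcoef : |‖x‖⁻¹ - ‖y‖⁻¹| * ‖y‖ = |‖y‖ - ‖x‖| / ‖x‖ := by
    rw [inv_sub_inv hx₀.ne' hy₀.ne', abs_div, abs_of_pos (mul_pos hx₀ hy₀)]
    field_simp
  calc ‖normalize x - normalize y‖ ≤ ‖x‖⁻¹ * ‖x - y‖ + |‖x‖⁻¹ - ‖y‖⁻¹| * ‖y‖ := by
        rw [hsplit]
        refine (norm_add_le _ _).trans_eq ?_
        rw [norm_smul, norm_smul, Real.norm_eq_abs, Real.norm_eq_abs, abs_inv, abs_norm]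
    _ ≤ ‖x - y‖ / ‖x‖ + ‖x - y‖ / ‖x‖ := by
        rw [hcoef, inv_mul_eq_div, abs_sub_comm]
        gcongr
        exact abs_norm_sub_norm_le x y
    _ = 2 * ‖x - y‖ / ‖x‖ := by ring

lemma ControlledOn.normalize {X : Type*} {d : X → X → ℝ} {s : Set X} {K m : ℝ} {f : X → F}
    (hf : ControlledOn d K f s) (hm : 0 < m) (hfm : ∀ x ∈ s, m ≤ ‖f x‖) :
    ControlledOn d (2 / m * K) (fun x => normalize (f x)) s := by
  intro x hx y hy
  have hfx : 0 < ‖f x‖ := hm.trans_le (hfm x hx)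
  calc ‖NormedSpace.normalize (f x) - NormedSpace.normalize (f y)‖
        ≤ 2 * ‖f x - f y‖ / ‖f x‖ :=
        norm_normalize_sub_normalize_le (norm_pos_iff.1 hfx) _
    _ ≤ 2 * ‖f x - f y‖ / m := by gcongr; exact hfm x hx
    _ ≤ 2 * (K * d x y) / m := by gcongr; exact hf x hx y hy
    _ = 2 / m * K * d x y := by ring

end Normalize

section NormalPart

variable {ι F : Type*} [Fintype ι] [NormedAddCommGroup F] [InnerProductSpace ℝ F]

def normalPart (e : ι → F) (v : F) : F :=
  v - ∑ i, ⟪e i, v⟫ • e i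

lemma inner_normalPart {e : ι → F} (he : Orthonormal ℝ e) (v : F) (j : ι) :
    ⟪e j, normalPart e v⟫ = 0 := by
  rw [normalPart, inner_sub_right, he.inner_right_fintype, sub_self]

lemma norm_normalPart_sub_le {e : ι → F} (he : ∀ i, ‖e i‖ ≤ 1) (v : F) :
    ‖normalPart e v - v‖ ≤ ∑ i, |⟪e i, v⟫| := by
  rw [normalPart, sub_sub_cancel_left, norm_neg]
  refine (norm_sum_le _ _).trans (Finset.sum_le_sum fun i _ => ?_)
  rw [norm_smul, Real.norm_eq_abs]
  exact mul_le_of_le_one_right (abs_nonneg _) (he i)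

variable {X : Type*} {d : X → X → ℝ} {s : Set X} {L : ℝ} {e : ι → X → F}

lemma ControlledOn.normalPart (he : ∀ i, ControlledOn d L (e i) s)
    (he_le : ∀ i, ∀ x ∈ s, ‖e i x‖ ≤ 1) (v : F) :
    ControlledOn d (Fintype.card ι * (2 * ‖v‖ * L)) (fun x => normalPart (e · x) v) s := by
  have hcoef (i : ι) : ControlledOn d (L * ‖v‖ + 1 * 0) (fun x => ⟪e i x, v⟫) s :=
    (he i).inner (const v) (he_le i) fun _ _ => le_rfl
  have hterm (i : ι) := (hcoef i).smul (he i)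
    (fun x hx => (abs_real_inner_le_norm _ _).trans
      (mul_le_of_le_one_left (norm_nonneg _) (he_le i x hx))) (he_le i)
  convert (const v).sub (sum Finset.univ fun i _ => hterm i) using 1
  · simp only [Finset.sum_const, Finset.card_univ, nsmul_eq_mul]
    ring
  · rfl

lemma norm_normalPart_sub_le_of_orthogonal (he : ∀ i, ControlledOn d L (e i) s)
    (he_le : ∀ i, ∀ x ∈ s, ‖e i x‖ ≤ 1) {x₀ : X} (hx₀ : x₀ ∈ s) {v : F}
    (hv : ∀ i, ⟪e i x₀, v⟫ = 0) {x : X} (hx : x ∈ s) :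
    ‖normalPart (e · x) v - v‖ ≤ Fintype.card ι * (L * d x x₀ * ‖v‖) := by
  refine (norm_normalPart_sub_le (fun i => he_le i x hx) v).trans ?_
  rw [← nsmul_eq_mul, ← Finset.card_univ, ← Finset.sum_const]
  refine Finset.sum_le_sum fun i _ => ?_
  calc |⟪e i x, v⟫| = |⟪e i x - e i x₀, v⟫| := by rw [inner_sub_left, hv i, sub_zero]
    _ ≤ ‖e i x - e i x₀‖ * ‖v‖ := abs_real_inner_le_norm _ _
    _ ≤ L * d x x₀ * ‖v‖ := by gcongr; exact he i x hx x₀ hx₀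

end NormalPart

lemma norm_mem_Icc_of_norm_sub_le {F : Type*} [SeminormedAddCommGroup F] {n v : F} (hn : ‖n‖ = 1)
    {δ : ℝ} (hv : ‖v - n‖ ≤ δ) : 1 - δ ≤ ‖v‖ ∧ ‖v‖ ≤ 1 + δ := by
  have := abs_le.1 ((abs_norm_sub_norm_le v n).trans hv)
  constructor <;> linarith [this.1, this.2]

section GramSchmidt

variable {F : Type*} [NormedAddCommGroup F] [InnerProductSpace ℝ F]

def rejection (u b : F) : F :=
  b - ⟪u, b⟫ • u

lemma inner_rejection_self {u : F} (hu : ‖u‖ = 1) (b : F) : ⟪u, rejection u b⟫ = 0 := by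
  rw [rejection, inner_sub_right, real_inner_smul_right, real_inner_self_eq_norm_sq, hu]
  ring

lemma abs_inner_le_of_near_orthonormal {n₁ n₂ a b : F} (hn₁ : ‖n₁‖ = 1) (hn₂ : ‖n₂‖ = 1)
    (hn : ⟪n₁, n₂⟫ = 0) {δ : ℝ} (ha : ‖a - n₁‖ ≤ δ) (hb : ‖b - n₂‖ ≤ δ) :
    |⟪a, b⟫| ≤ 2 * δ + δ ^ 2 := by
  have hδ : 0 ≤ δ := (norm_nonneg _).trans ha
  have hsplit : ⟪a, b⟫ = ⟪a - n₁, b - n₂⟫ + ⟪a - n₁, n₂⟫ + ⟪n₁, b - n₂⟫ := by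
    simp only [inner_sub_left, inner_sub_right, hn]; ring
  have h₁ := abs_real_inner_le_norm (a - n₁) (b - n₂)
  have h₂ := abs_real_inner_le_norm (a - n₁) n₂
  have h₃ := abs_real_inner_le_norm n₁ (b - n₂)
  rw [hn₁] at h₃
  rw [hn₂] at h₂
  rw [hsplit]
  refine (abs_add_three _ _ _).trans ?_
  nlinarith [mul_le_mul ha hb (norm_nonneg _) hδ]

variable {n₁ n₂ a b : F} (hn₁ : ‖n₁‖ = 1) (hn₂ : ‖n₂‖ = 1) (hn : ⟪n₁, n₂⟫ = 0)
  (ha : ‖a - n₁‖ ≤ 1 / 10) (hb : ‖b - n₂‖ ≤ 1 / 10)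
include hn₁ hn₂ hn ha hb

lemma abs_inner_normalize_le_of_near_orthonormal :
    |⟪normalize a, b⟫| ≤ 1 / 4 := by
  have ha' : 9 / 10 ≤ ‖a‖ := by linarith [(norm_mem_Icc_of_norm_sub_le hn₁ ha).1]
  have hab := abs_inner_le_of_near_orthonormal hn₁ hn₂ hn ha hb
  rw [NormedSpace.normalize, real_inner_smul_left, abs_mul, abs_inv, abs_norm,
    inv_mul_le_iff₀ (by linarith)]
  linarith

lemma half_le_norm_rejection_of_near_orthonormal :
    1 / 2 ≤ ‖rejection (normalize a) b‖ := by
  have ha₀ : a ≠ 0 := by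
    rintro rfl
    linarith [(norm_mem_Icc_of_norm_sub_le hn₁ ha).1, norm_zero (E := F)]
  have hN := norm_normalize ha₀
  have hg := abs_inner_normalize_le_of_near_orthonormal hn₁ hn₂ hn ha hb
  have hb' := (norm_mem_Icc_of_norm_sub_le hn₂ hb).1
  calc 1 / 2 ≤ ‖b‖ - |⟪normalize a, b⟫| * ‖normalize a‖ := by
        rw [hN]; linarith
    _ ≤ ‖b - ⟪normalize a, b⟫ • normalize a‖ := by
        rw [← Real.norm_eq_abs, ← norm_smul]
        exact norm_sub_norm_le _ _

end GramSchmidt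

section GramSchmidtField

variable {X F : Type*} [NormedAddCommGroup F] [InnerProductSpace ℝ F]
  {d : X → X → ℝ} {s : Set X} {K : ℝ} {n₁ n₂ : F} {v₁ v₂ : X → F}
  (hn₁ : ‖n₁‖ = 1) (hn₂ : ‖n₂‖ = 1) (hn : ⟪n₁, n₂⟫ = 0)
  (hv₁n : ∀ x ∈ s, ‖v₁ x - n₁‖ ≤ 1 / 10) (hv₂n : ∀ x ∈ s, ‖v₂ x - n₂‖ ≤ 1 / 10)
include hn₁ hn₂ hn hv₁n hv₂n

lemma orthonormal_gramSchmidt_of_near {x : X} (hx : x ∈ s) :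
    ‖normalize (v₁ x)‖ = 1 ∧
    ‖normalize (rejection (normalize (v₁ x)) (v₂ x))‖ = 1 ∧
    ⟪normalize (v₁ x),
      normalize (rejection (normalize (v₁ x)) (v₂ x))⟫ = 0 := by
  have hv₁ : v₁ x ≠ 0 := norm_pos_iff.1 <| by
    linarith [(norm_mem_Icc_of_norm_sub_le hn₁ (hv₁n x hx)).1]
  have hP : rejection (normalize (v₁ x)) (v₂ x) ≠ 0 := norm_pos_iff.1 <| by
    linarith [half_le_norm_rejection_of_near_orthonormal hn₁ hn₂ hn (hv₁n x hx) (hv₂n x hx)]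
  have hN₁ := norm_normalize hv₁
  refine ⟨hN₁, norm_normalize hP, ?_⟩
  set N₁ := normalize (v₁ x)
  rw [NormedSpace.normalize, real_inner_smul_right, inner_rejection_self hN₁, mul_zero]

lemma controlledOn_gramSchmidt_of_near (hv₁ : ControlledOn d K v₁ s) (hv₂ : ControlledOn d K v₂ s)
    (hK : 0 ≤ K) (hd : ∀ x y, 0 ≤ d x y) :
    ControlledOn d (20 * K) (fun x => normalize (v₁ x)) s ∧
    ControlledOn d (20 * K)
      (fun x => normalize (rejection (normalize (v₁ x)) (v₂ x))) s := by
  have hN₁ : ControlledOn d (2 / (9 / 10) * K) (fun x => normalize (v₁ x)) s :=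
    hv₁.normalize (by norm_num) fun x hx =>
      by linarith [(norm_mem_Icc_of_norm_sub_le hn₁ (hv₁n x hx)).1]
  have hN₁_le : ∀ x ∈ s, ‖normalize (v₁ x)‖ ≤ 1 := fun x hx =>
    (orthonormal_gramSchmidt_of_near hn₁ hn₂ hn hv₁n hv₂n hx).1.le
  have hg := hN₁.inner hv₂ hN₁_le fun x hx =>
    (norm_mem_Icc_of_norm_sub_le hn₂ (hv₂n x hx)).2
  have hP := hv₂.sub (hg.smul hN₁ (fun x hx =>
    abs_inner_normalize_le_of_near_orthonormal hn₁ hn₂ hn (hv₁n x hx) (hv₂n x hx)) hN₁_le)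
  have hN₂ := hP.normalize (by norm_num : (0 : ℝ) < 1 / 2) fun x hx =>
    half_le_norm_rejection_of_near_orthonormal hn₁ hn₂ hn (hv₁n x hx) (hv₂n x hx)
  exact ⟨hN₁.mono (by linarith) hd, hN₂.mono (by linarith) hd⟩

end GramSchmidtField

section NormalFrame

variable {F : Type*} [NormedAddCommGroup F] [InnerProductSpace ℝ F]

lemma inner_normalize_left_eq_zero {v u : F} (h : ⟪v, u⟫ = 0) :
    ⟪normalize v, u⟫ = 0 := by
  rw [NormedSpace.normalize, real_inner_smul_left, h, mul_zero]

lemma inner_rejection_left_eq_zero {w b u : F} (hw : ⟪w, u⟫ = 0) (hb : ⟪b, u⟫ = 0) :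
    ⟪rejection w b, u⟫ = 0 := by
  rw [rejection, inner_sub_left, real_inner_smul_left, hw, hb]
  ring

variable {ι X : Type*} [Fintype ι] {d : X → X → ℝ} {s : Set X} {L : ℝ} {e : ι → X → F}

theorem exists_orthonormal_normal_pair (he_orth : ∀ x ∈ s, Orthonormal ℝ (e · x))
    (he : ∀ i, ControlledOn d L (e i) s) (hL : 0 ≤ L) (hd : ∀ x y, 0 ≤ d x y)
    {x₀ : X} (hx₀ : x₀ ∈ s) (hs : ∀ x ∈ s, Fintype.card ι * (L * d x x₀) ≤ 1 / 10)
    {n₁ n₂ : F} (hn₁ : ‖n₁‖ = 1) (hn₂ : ‖n₂‖ = 1) (hn : ⟪n₁, n₂⟫ = 0)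
    (hn₁e : ∀ i, ⟪e i x₀, n₁⟫ = 0) (hn₂e : ∀ i, ⟪e i x₀, n₂⟫ = 0) :
    ∃ N₁ N₂ : X → F,
      (∀ x ∈ s, ‖N₁ x‖ = 1 ∧ ‖N₂ x‖ = 1 ∧ ⟪N₁ x, N₂ x⟫ = 0 ∧
        ∀ i, ⟪N₁ x, e i x⟫ = 0 ∧ ⟪N₂ x, e i x⟫ = 0) ∧
      ControlledOn d (40 * Fintype.card ι * L) N₁ s ∧
      ControlledOn d (40 * Fintype.card ι * L) N₂ s := by
  have he_le (i : ι) (x : X) (hx : x ∈ s) : ‖e i x‖ ≤ 1 := ((he_orth x hx).1 i).le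
  have hnear {n : F} (hn : ‖n‖ = 1) (hne : ∀ i, ⟪e i x₀, n⟫ = 0) (x : X) (hx : x ∈ s) :
      ‖normalPart (e · x) n - n‖ ≤ 1 / 10 := by
    have := norm_normalPart_sub_le_of_orthogonal he he_le hx₀ hne hx
    rw [hn, mul_one] at this
    exact this.trans (hs x hx)
  have hv (n : F) (hn : ‖n‖ = 1) :
      ControlledOn d (Fintype.card ι * (2 * L)) (fun x => normalPart (e · x) n) s := by
    simpa [hn] using ControlledOn.normalPart he he_le n
  obtain ⟨hN₁, hN₂⟩ := controlledOn_gramSchmidt_of_near hn₁ hn₂ hn (hnear hn₁ hn₁e) (hnear hn₂ hn₂e)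
    (hv n₁ hn₁) (hv n₂ hn₂) (by positivity) hd
  refine ⟨_, _, fun x hx => ?_, by convert hN₁ using 1; ring, by convert hN₂ using 1; ring⟩
  obtain ⟨h₁, h₂, h₁₂⟩ := orthonormal_gramSchmidt_of_near hn₁ hn₂ hn (hnear hn₁ hn₁e)
    (hnear hn₂ hn₂e) hx
  have hve (n : F) (i : ι) : ⟪normalPart (e · x) n, e i x⟫ = 0 := by
    rw [real_inner_comm, inner_normalPart (he_orth x hx)]
  have hN₁e (i : ι) := inner_normalize_left_eq_zero (hve n₁ i)
  exact ⟨h₁, h₂, h₁₂, fun i => ⟨hN₁e i, inner_normalize_left_eq_zero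
    (inner_rejection_left_eq_zero (hN₁e i) (hve n₂ i))⟩⟩

end NormalFrame

section ConformalPair

variable {F : Type*} [NormedAddCommGroup F] [InnerProductSpace ℝ F]

def IsConformalPair (p : Fin 2 → F) (W : ℝ) : Prop :=
  ⟪p 0, p 0⟫ = W ∧ ⟪p 1, p 1⟫ = W ∧ ⟪p 0, p 1⟫ = 0 ∧ 0 < W

variable {p : Fin 2 → F} {W : ℝ}

lemma IsConformalPair.inner_self (hp : IsConformalPair p W) (i : Fin 2) : ⟪p i, p i⟫ = W := by
  fin_cases i
  exacts [hp.1, hp.2.1]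

lemma IsConformalPair.ne_zero (hp : IsConformalPair p W) (i : Fin 2) : p i ≠ 0 := by
  intro h
  have := hp.inner_self i
  rw [h, inner_zero_left] at this
  exact hp.2.2.2.ne this

lemma IsConformalPair.orthonormal_normalize (hp : IsConformalPair p W) :
    Orthonormal ℝ (fun i => normalize (p i)) := by
  refine ⟨fun i => norm_normalize (hp.ne_zero i), fun i j hij => ?_⟩
  simp only [NormedSpace.normalize, real_inner_smul_left, real_inner_smul_right]
  fin_cases i <;> fin_cases j
  · exact absurd rfl hij
  · simp [hp.2.2.1]
  · simp [real_inner_comm, hp.2.2.1]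
  · exact absurd rfl hij

lemma IsConformalPair.sqrt_le_norm {c : ℝ} (hp : IsConformalPair p W) (hc : c ≤ W) (i : Fin 2) :
    √c ≤ ‖p i‖ := by
  have h := hc.trans_eq (hp.inner_self i).symm
  rw [real_inner_self_eq_norm_sq] at h
  exact (Real.sqrt_le_sqrt h).trans_eq (Real.sqrt_sq (norm_nonneg _))

end ConformalPair

lemma mul_rpow_dist_le_one_of_mem_ball {X : Type*} [PseudoMetricSpace X] {x x₀ : X} {α K : ℝ}
    (hα : 0 < α) (hK : 0 < K) (hx : x ∈ ball x₀ (K⁻¹ ^ α⁻¹)) : K * dist x x₀ ^ α ≤ 1 := by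
  have h := (Real.le_rpow_inv_iff_of_pos dist_nonneg (inv_pos.2 hK).le hα).1 (mem_ball.1 hx).le
  calc K * dist x x₀ ^ α ≤ K * K⁻¹ := by gcongr
    _ = 1 := mul_inv_cancel₀ hK.ne'

lemma inner_eq_zero_of_inner_normalize_eq_zero {F : Type*} [NormedAddCommGroup F]
    [InnerProductSpace ℝ F] {u v : F} (h : ⟪u, normalize v⟫ = 0) : ⟪u, v⟫ = 0 := by
  rw [← norm_smul_normalize v, real_inner_smul_right, h, mul_zero]

/-- **Construction of a Hölder continuous orthonormal normal frame.** Near the origin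
one can construct an orthonormal basis `N₁, N₂` of the normal space of `Z`, defined on a
ball `B_{ν₂}(0)` and Hölder continuous with constant `c₉`, where `ν₂` and `c₉` depend
only on `c₆`, `C₁` and `α`. -/
theorem hoelder_orthonormal_normal_frame
    (α : ℝ) (hα : α ∈ Set.Ioo (0 : ℝ) 1)
    (c₆ : ℝ) (hc₆ : 0 < c₆)
    (C₁ : ℝ) (hC₁ : 0 < C₁) :
    ∃ ν₂ : ℝ, 0 < ν₂ ∧ ∃ c₉ : ℝ, 0 < c₉ ∧
      ∀ (Z : E2 → E4) (WZ : E2 → ℝ),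
        ContDiffOn ℝ 1 Z (ball (0 : E2) 1) →
        (∀ w ∈ ball (0 : E2) 1,
          ⟪pd Z 0 w, pd Z 0 w⟫ = WZ w ∧ ⟪pd Z 1 w, pd Z 1 w⟫ = WZ w ∧
          ⟪pd Z 0 w, pd Z 1 w⟫ = 0 ∧ 0 < WZ w) →
        (∀ w ∈ ball (0 : E2) (1 / 2), C₁ ≤ WZ w) →
        (∀ i : Fin 2, ∀ w₁ ∈ ball (0 : E2) (1 / 4), ∀ w₂ ∈ ball (0 : E2) (1 / 4),
          ‖pd Z i w₁ - pd Z i w₂‖ ≤ c₆ * dist w₁ w₂ ^ α) →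
        ∀ Nb₁ Nb₂ : E4,
          ‖Nb₁‖ = 1 → ‖Nb₂‖ = 1 → ⟪Nb₁, Nb₂⟫ = 0 →
          ⟪Nb₁, pd Z 0 0⟫ = 0 → ⟪Nb₁, pd Z 1 0⟫ = 0 →
          ⟪Nb₂, pd Z 0 0⟫ = 0 → ⟪Nb₂, pd Z 1 0⟫ = 0 →
          ∃ N₁ N₂ : E2 → E4,
            (∀ w ∈ ball (0 : E2) ν₂,
              ‖N₁ w‖ = 1 ∧ ‖N₂ w‖ = 1 ∧ ⟪N₁ w, N₂ w⟫ = 0 ∧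
              ⟪N₁ w, pd Z 0 w⟫ = 0 ∧ ⟪N₁ w, pd Z 1 w⟫ = 0 ∧
              ⟪N₂ w, pd Z 0 w⟫ = 0 ∧ ⟪N₂ w, pd Z 1 w⟫ = 0) ∧
            ∀ w₁ ∈ ball (0 : E2) ν₂, ∀ w₂ ∈ ball (0 : E2) ν₂,
              ‖N₁ w₁ - N₁ w₂‖ ≤ c₉ * dist w₁ w₂ ^ α ∧
              ‖N₂ w₁ - N₂ w₂‖ ≤ c₉ * dist w₁ w₂ ^ α := by
  set L := 2 / √C₁ * c₆
  have hL : 0 < L := by positivity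
  set ν := min (1 / 4) ((20 * L)⁻¹ ^ α⁻¹)
  refine ⟨ν, by positivity, 40 * 2 * L, by positivity, ?_⟩
  intro Z WZ _ hconf hW hHol Nb₁ Nb₂ hNb₁ hNb₂ hNb h10 h11 h20 h21
  have hν : ball (0 : E2) ν ⊆ ball 0 (1 / 4) := ball_subset_ball (min_le_left _ _)
  have hconf' (w) (hw : w ∈ ball (0 : E2) ν) : IsConformalPair (pd Z · w) (WZ w) :=
    hconf w (ball_subset_ball (by norm_num) (hν hw))
  have he (i : Fin 2) : ControlledOn (fun x y => dist x y ^ α) L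
      (fun w => normalize (pd Z i w)) (ball 0 ν) :=
    ControlledOn.normalize (fun w₁ h₁ w₂ h₂ => hHol i w₁ (hν h₁) w₂ (hν h₂))
      (Real.sqrt_pos.2 hC₁) fun w hw => (hconf' w hw).sqrt_le_norm
        (hW w (ball_subset_ball (by norm_num) (hν hw))) i
  have hs (w) (hw : w ∈ ball (0 : E2) ν) :
      (Fintype.card (Fin 2) : ℝ) * (L * dist w 0 ^ α) ≤ 1 / 10 := by
    have := mul_rpow_dist_le_one_of_mem_ball (K := 20 * L) hα.1 (by positivity)
      (ball_subset_ball (min_le_right _ _) hw)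
    rw [Fintype.card_fin]
    linarith
  have horth₀ {n : E4} (h0 : ⟪n, pd Z 0 0⟫ = 0) (h1 : ⟪n, pd Z 1 0⟫ = 0) (i : Fin 2) :
      ⟪normalize (pd Z i 0), n⟫ = 0 :=
    inner_normalize_left_eq_zero (by rw [real_inner_comm]; fin_cases i; exacts [h0, h1])
  obtain ⟨N₁, N₂, hframe, hN₁, hN₂⟩ := exists_orthonormal_normal_pair
    (fun w hw => (hconf' w hw).orthonormal_normalize) he hL.le
    (fun _ _ => Real.rpow_nonneg dist_nonneg _) (mem_ball_self (by positivity)) hs hNb₁ hNb₂ hNb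
    (horth₀ h10 h11) (horth₀ h20 h21)
  refine ⟨N₁, N₂, fun w hw => ?_, fun w₁ h₁ w₂ h₂ => ⟨hN₁ w₁ h₁ w₂ h₂, hN₂ w₁ h₁ w₂ h₂⟩⟩
  obtain ⟨h₁, h₂, h₁₂, hperp⟩ := hframe w hw
  exact ⟨h₁, h₂, h₁₂, inner_eq_zero_of_inner_normalize_eq_zero (hperp 0).1,
    inner_eq_zero_of_inner_normalize_eq_zero (hperp 1).1,
    inner_eq_zero_of_inner_normalize_eq_zero (hperp 0).2,
    inner_eq_zero_of_inner_normalize_eq_zero (hperp 1).2⟩
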